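/- arXiv:1707.05060 — 8 statements merged into one kernel-verified Lean document; each statement's English description precedes it below -/
import Mathlib

section
/- Let P, X, Y be points of the Euclidean plane with X ≠ P and Y ≠ P. If the angle ∠ X P Y is strictly less than π/3, then dist X Y < max (dist P X) (dist P Y). -/
/-! An angle below `π / 3` has cosine above `1 / 2`, so by the law of cosines the opposite side
satisfies `c ^ 2 < a ^ 2 + b ^ 2 - a b`, and `a ^ 2 + b ^ 2 - a b ≤ max a b ^ 2`. -/

open EuclideanGeometry Real

lemma mul_self_add_mul_self_sub_mul_le_max_mul_self {a b : ℝ} (ha : 0 ≤ a) (hb : 0 ≤ b) :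
    a * a + b * b - a * b ≤ max a b * max a b := by
  rcases le_total a b with hab | hab
  · rw [max_eq_right hab]; nlinarith
  · rw [max_eq_left hab]; nlinarith

theorem dist_lt_max_dist_of_half_lt_cos_angle {V Pt : Type*} [NormedAddCommGroup V]
    [InnerProductSpace ℝ V] [MetricSpace Pt] [NormedAddTorsor V Pt] {X P Y : Pt}
    (h : 1 / 2 < cos (∠ X P Y)) : dist X Y < max (dist X P) (dist Y P) := by
  -- a degenerate angle such as `∠ P P Y` is `π / 2` by convention, with cosine `0`
  have hX : X ≠ P := by rintro rfl; norm_num at h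
  have hY : Y ≠ P := by rintro rfl; norm_num at h
  have hsides : 0 < dist X P * dist Y P := mul_pos (dist_pos.2 hX) (dist_pos.2 hY)
  have hsq : dist X Y * dist X Y < max (dist X P) (dist Y P) * max (dist X P) (dist Y P) :=
    calc dist X Y * dist X Y
        = dist X P * dist X P + dist Y P * dist Y P
            - 2 * dist X P * dist Y P * cos (∠ X P Y) := law_cos X P Y
      _ < dist X P * dist X P + dist Y P * dist Y P - dist X P * dist Y P := by nlinarith
      _ ≤ max (dist X P) (dist Y P) * max (dist X P) (dist Y P) :=
          mul_self_add_mul_self_sub_mul_le_max_mul_self dist_nonneg dist_nonneg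
  exact lt_of_mul_self_lt_mul_self₀ (le_max_of_le_left dist_nonneg) hsq

theorem angle_lt_pi_div_three_dist_lt_general (P X Y : EuclideanSpace ℝ (Fin 2))
    (h : ∠ X P Y < π / 3) :
    dist X Y < max (dist P X) (dist P Y) := by
  have hcos : 1 / 2 < cos (∠ X P Y) := by
    rw [← cos_pi_div_three]
    exact cos_lt_cos_of_nonneg_of_le_pi (angle_nonneg X P Y) (by linarith [pi_pos]) h
  simpa only [dist_comm P] using dist_lt_max_dist_of_half_lt_cos_angle hcos

/-- If the angle at `P` between `X` and `Y` is strictly less than `π/3`, then the distance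
from `X` to `Y` is strictly less than the maximum of the distances from `P` to `X` and `Y`. -/
theorem angle_lt_pi_div_three_dist_lt (P X Y : EuclideanSpace ℝ (Fin 2))
    (hX : X ≠ P) (hY : Y ≠ P) (h : ∠ X P Y < π / 3) :
    dist X Y < max (dist P X) (dist P Y) :=
  angle_lt_pi_div_three_dist_lt_general P X Y h
end

section
/- Let A, B, C, C' be points of the Euclidean plane such that dist A C ≥ 1, dist B C ≥ 1, dist A B < 2, the angles ∠ B A C and ∠ A B C are both at most π/2, and dist A C' = dist B C' = 1. Then the area of the triangle A B C is at least the area of the triangle A B C'. -/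
open EuclideanGeometry Real MeasureTheory
open scoped RealInnerProductSpace Pointwise

/-! The squared area of a triangle with edge vectors `u`, `v` at a vertex is a quarter of the Gram
determinant `‖u‖²‖v‖² - ⟪u, v⟫²`, so it suffices to compare Gram determinants with `u = B - A`.
Writing `d = ‖u‖²` and `s = ⟪u, v⟫`, the apex `C'` at distance one from both ends of the base
gives `s = d / 2` and Gram determinant `d - d² / 4`. The acute base angles at `A` and `B` say
`0 ≤ s ≤ d`, and the Gram determinant is unchanged when the apex is reflected through the
perpendicular bisector of `AB` (`v ↦ u - v`), so we may assume `s ≤ d / 2`; then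
`d ‖v‖² - s² ≥ d - d² / 4` because `‖v‖ ≥ 1`. -/

namespace InnerProductGeometry

variable {V : Type*} [NormedAddCommGroup V] [InnerProductSpace ℝ V]

theorem inner_nonneg_of_angle_le_pi_div_two {x y : V} (h : angle x y ≤ π / 2) : 0 ≤ ⟪x, y⟫ := by
  rw [angle, arccos_le_pi_div_two] at h
  rcases div_nonneg_iff.mp h with ⟨h, -⟩ | ⟨-, h⟩
  · exact h
  · linarith [abs_real_inner_le_norm x y, neg_abs_le ⟪x, y⟫]

def gramDet (u v : V) : ℝ := ‖u‖ ^ 2 * ‖v‖ ^ 2 - ⟪u, v⟫ ^ 2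

theorem gramDet_self_sub_right (u v : V) : gramDet u (u - v) = gramDet u v := by
  simp only [gramDet, norm_sub_sq_real, inner_sub_right, real_inner_self_eq_norm_sq]
  ring

theorem gramDet_eq_of_norm_eq_one_of_norm_sub_eq_one {u w : V} (hw : ‖w‖ = 1)
    (hwu : ‖w - u‖ = 1) : gramDet u w = ‖u‖ ^ 2 - ‖u‖ ^ 4 / 4 := by
  have hinner : ⟪u, w⟫ = ‖u‖ ^ 2 / 2 := by
    have := norm_sub_sq_real w u
    rw [hw, hwu, real_inner_comm] at this
    linarith
  rw [gramDet, hinner, hw]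
  ring

theorem le_gramDet_of_inner_le_half {u v : V} (hv : 1 ≤ ‖v‖) (h₀ : 0 ≤ ⟪u, v⟫)
    (h₁ : ⟪u, v⟫ ≤ ‖u‖ ^ 2 / 2) : ‖u‖ ^ 2 - ‖u‖ ^ 4 / 4 ≤ gramDet u v := by
  have hnorm : ‖u‖ ^ 2 ≤ ‖u‖ ^ 2 * ‖v‖ ^ 2 := by
    nlinarith [sq_nonneg ‖u‖, one_le_pow₀ (n := 2) hv]
  have hinner : ⟪u, v⟫ ^ 2 ≤ (‖u‖ ^ 2 / 2) ^ 2 := pow_le_pow_left₀ h₀ h₁ 2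
  rw [gramDet]
  linarith

theorem le_gramDet {u v : V} (hv : 1 ≤ ‖v‖) (hvu : 1 ≤ ‖v - u‖) (h₀ : 0 ≤ ⟪u, v⟫)
    (h₁ : ⟪u, v⟫ ≤ ‖u‖ ^ 2) : ‖u‖ ^ 2 - ‖u‖ ^ 4 / 4 ≤ gramDet u v := by
  rcases le_total ⟪u, v⟫ (‖u‖ ^ 2 / 2) with hs | hs
  · exact le_gramDet_of_inner_le_half hv h₀ hs
  · have hinner : ⟪u, u - v⟫ = ‖u‖ ^ 2 - ⟪u, v⟫ := by
      rw [inner_sub_right, real_inner_self_eq_norm_sq]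
    rw [← gramDet_self_sub_right]
    exact le_gramDet_of_inner_le_half (by rwa [norm_sub_rev]) (by linarith) (by linarith)

end InnerProductGeometry

open InnerProductGeometry

theorem EuclideanGeometry.gramDet_vsub_le {V P : Type*} [NormedAddCommGroup V]
    [InnerProductSpace ℝ V] [MetricSpace P] [NormedAddTorsor V P] {A B C C' : P}
    (hAC : 1 ≤ dist A C) (hBC : 1 ≤ dist B C) (hA : ∠ B A C ≤ π / 2) (hB : ∠ A B C ≤ π / 2)
    (hAC' : dist A C' = 1) (hBC' : dist B C' = 1) :
    gramDet (B -ᵥ A) (C' -ᵥ A) ≤ gramDet (B -ᵥ A) (C -ᵥ A) := by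
  have hsub (X : P) : X -ᵥ A - (B -ᵥ A) = X -ᵥ B := vsub_sub_vsub_cancel_right X B A
  rw [gramDet_eq_of_norm_eq_one_of_norm_sub_eq_one (by rw [← dist_eq_norm_vsub', hAC'])
    (by rw [hsub, ← dist_eq_norm_vsub', hBC'])]
  refine le_gramDet (by rwa [← dist_eq_norm_vsub']) (by rwa [hsub, ← dist_eq_norm_vsub'])
    (inner_nonneg_of_angle_le_pi_div_two hA) ?_
  have hB' := inner_nonneg_of_angle_le_pi_div_two hB
  rw [← neg_vsub_eq_vsub_rev B A, ← hsub C, inner_neg_left, inner_sub_right,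
    real_inner_self_eq_norm_sq] at hB'
  linarith

namespace EuclideanSpace

theorem sq_det_eq_gramDet (u v : EuclideanSpace ℝ (Fin 2)) :
    (u 0 * v 1 - u 1 * v 0) ^ 2 = gramDet u v := by
  simp only [gramDet, EuclideanSpace.norm_sq_eq, Fin.sum_univ_two, Real.norm_eq_abs, sq_abs,
    PiLp.inner_apply, RCLike.inner_apply, conj_trivial]
  ring

theorem volume_convexHull_triangle (A B C : EuclideanSpace ℝ (Fin 2)) :
    volume (convexHull ℝ ({A, B, C} : Set (EuclideanSpace ℝ (Fin 2)))) =
      ENNReal.ofReal √(gramDet (B -ᵥ A) (C -ᵥ A)) *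
        volume (convexHull ℝ ({0, single 0 1, single 1 1} : Set (EuclideanSpace ℝ (Fin 2)))) := by
  set b := (basisFun (Fin 2) ℝ).toBasis
  set f := b.constr ℝ ![B -ᵥ A, C -ᵥ A]
  have hdet : LinearMap.det f = (B -ᵥ A) 0 * (C -ᵥ A) 1 - (B -ᵥ A) 1 * (C -ᵥ A) 0 := by
    rw [← LinearMap.det_toMatrix b, Matrix.det_fin_two]
    simp [f, LinearMap.toMatrix_apply, b, mul_comm]
  have himage : ({A, B, C} : Set (EuclideanSpace ℝ (Fin 2))) =
      A +ᵥ f '' {0, single 0 1, single 1 1} := by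
    have he (i : Fin 2) : single i 1 = b i := (basisFun_apply (Fin 2) ℝ i).symm
    simp [Set.image_insert_eq, Set.vadd_set_insert, he, f]
  rw [himage, convexHull_vadd, ← LinearMap.image_convexHull, measure_vadd,
    Measure.addHaar_image_linearMap, hdet, ← sqrt_sq_eq_abs, sq_det_eq_gramDet]

end EuclideanSpace

theorem area_triangle_ge_of_shorter_sides_general (A B C C' : EuclideanSpace ℝ (Fin 2))
    (hAC : 1 ≤ dist A C) (hBC : 1 ≤ dist B C)
    (hA : ∠ B A C ≤ π / 2) (hB : ∠ A B C ≤ π / 2)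
    (hAC' : dist A C' = 1) (hBC' : dist B C' = 1) :
    volume (convexHull ℝ ({A, B, C'} : Set (EuclideanSpace ℝ (Fin 2)))) ≤
      volume (convexHull ℝ ({A, B, C} : Set (EuclideanSpace ℝ (Fin 2)))) := by
  rw [EuclideanSpace.volume_convexHull_triangle A B C',
    EuclideanSpace.volume_convexHull_triangle A B C]
  gcongr
  exact gramDet_vsub_le hAC hBC hA hB hAC' hBC'

/-- If `dist A C ≥ 1`, `dist B C ≥ 1`, `dist A B < 2`, the angles at `A` and `B` in the
triangle `A B C` are at most `π/2`, and `C'` satisfies `dist A C' = dist B C' = 1`, then the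
area of the triangle `A B C` is at least the area of the triangle `A B C'`. -/
theorem area_triangle_ge_of_shorter_sides (A B C C' : EuclideanSpace ℝ (Fin 2))
    (hAC : 1 ≤ dist A C) (hBC : 1 ≤ dist B C) (hAB : dist A B < 2)
    (hA : ∠ B A C ≤ π / 2) (hB : ∠ A B C ≤ π / 2)
    (hAC' : dist A C' = 1) (hBC' : dist B C' = 1) :
    volume (convexHull ℝ ({A, B, C'} : Set (EuclideanSpace ℝ (Fin 2)))) ≤
      volume (convexHull ℝ ({A, B, C} : Set (EuclideanSpace ℝ (Fin 2)))) :=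
  area_triangle_ge_of_shorter_sides_general A B C C' hAC hBC hA hB hAC' hBC'
end

section
/- Let A, B, C be affinely independent points of the Euclidean plane with dist A B ≤ dist B C ≤ dist A C, and let D be a point of the segment [B, C] with dist B D = dist A B. Then the circumradius of the triangle A B D is at most the circumradius of the triangle A B C, and the inradius of the triangle A B D is at most the inradius of the triangle A B C; here the inradius of a nondegenerate triangle is its area divided by its semiperimeter, i.e. the inradius of A B C equals Area(A,B,C) / ((dist A B + dist B C + dist C A)/2). -/
open MeasureTheory

/-- The area of the triangle with vertices `A`, `B`, `C`: the 2-dimensional Lebesgue measure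
of the convex hull of `{A, B, C}`. -/
noncomputable def triangleArea (A B C : EuclideanSpace ℝ (Fin 2)) : ℝ :=
  (volume (convexHull ℝ ({A, B, C} : Set (EuclideanSpace ℝ (Fin 2))))).toReal

/-- The circumradius of the triangle `A B C`, via the formula
`R = (dist A B · dist B C · dist C A) / (4 · Area)`. -/
noncomputable def triangleCircumradius (A B C : EuclideanSpace ℝ (Fin 2)) : ℝ :=
  (dist A B * dist B C * dist C A) / (4 * triangleArea A B C)

/-- The inradius of the triangle `A B C`: its area divided by its semiperimeter. -/
noncomputable def triangleInradius (A B C : EuclideanSpace ℝ (Fin 2)) : ℝ :=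
  triangleArea A B C / ((dist A B + dist B C + dist C A) / 2)

/-! Write `D = lineMap B C v`, so that `dist A B = v * dist B C`. The affine map fixing `A` and `B`
and sending `C` to `D` has determinant `v`, hence `Area(ABD) = v * Area(ABC)`. The circumradius of
`ABD` is then `dist A B * dist B C * dist A D / (4 * Area(ABC))`, and `dist A D ≤ dist A C` because
`D` lies on a segment whose endpoints are in the closed ball of radius `dist A C` about `A`. For the
inradii it remains to show `v * (AB + BC + CA) ≤ 2 * AB + AD`, which follows from
`AC ≤ AD + DC = AD + (1 - v) * BC` and the triangle inequality `BC ≤ AB + AC`. -/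

theorem AffineIndependent.linearIndependent_vsub_fin_three {k V P : Type*} [Ring k]
    [AddCommGroup V] [Module k V] [AddTorsor V P] {p₀ p₁ p₂ : P}
    (h : AffineIndependent k ![p₀, p₁, p₂]) : LinearIndependent k ![p₁ -ᵥ p₀, p₂ -ᵥ p₀] := by
  rw [affineIndependent_iff_linearIndependent_vsub k _ (0 : Fin 3),
    ← linearIndependent_equiv (finSuccAboveEquiv (0 : Fin 3))] at h
  convert h using 1
  ext i
  fin_cases i <;> rfl

theorem MeasureTheory.Measure.addHaar_image_affineMap {E : Type*} [NormedAddCommGroup E]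
    [NormedSpace ℝ E] [MeasurableSpace E] [BorelSpace E] [FiniteDimensional ℝ E]
    (μ : Measure E) [μ.IsAddHaarMeasure] (f : E →ᵃ[ℝ] E) (s : Set E) :
    μ (f '' s) = ENNReal.ofReal |LinearMap.det f.linear| * μ s := by
  have hf : ⇑f = (· + f 0) ∘ f.linear := f.decomp
  rw [hf, Set.image_comp, Set.image_add_right, measure_preimage_add_right,
    Measure.addHaar_image_linearMap]

theorem triangleArea_map (f : EuclideanSpace ℝ (Fin 2) →ᵃ[ℝ] EuclideanSpace ℝ (Fin 2))
    (A B C : EuclideanSpace ℝ (Fin 2)) :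
    triangleArea (f A) (f B) (f C) = |LinearMap.det f.linear| * triangleArea A B C := by
  rw [triangleArea, triangleArea, ← Set.image_pair, ← Set.image_insert_eq,
    ← f.image_convexHull, Measure.addHaar_image_affineMap, ENNReal.toReal_mul,
    ENNReal.toReal_ofReal (abs_nonneg _)]

theorem triangleArea_lineMap {A B C : EuclideanSpace ℝ (Fin 2)}
    (hind : AffineIndependent ℝ ![A, B, C]) {v : ℝ} (hv : 0 ≤ v) :
    triangleArea A B (AffineMap.lineMap B C v) = v * triangleArea A B C := by
  let b := basisOfLinearIndependentOfCardEqFinrank hind.linearIndependent_vsub_fin_three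
    (by simp)
  -- in the basis `(B - A, C - A)`: `B - A ↦ B - A` and `C - A ↦ (1 - v) • (B - A) + v • (C - A)`
  let L := Matrix.toLin b b !![1, 1 - v; 0, v]
  let f := L.toAffineMap + AffineMap.const ℝ _ (A - L A)
  have hb0 : b 0 = B - A := by simp [b]
  have hb1 : b 1 = C - A := by simp [b]
  have hfx : ∀ x, f x = L (x - A) + A := fun x => by
    simp only [f, AffineMap.coe_add, LinearMap.coe_toAffineMap, AffineMap.coe_const, Pi.add_apply,
      Function.const_apply, map_sub]
    abel
  have hfA : f A = A := by simp [hfx]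
  have hfB : f B = B := by
    rw [hfx, ← hb0, Matrix.toLin_self]
    simp [Fin.sum_univ_two, hb0]
  have hfC : f C = AffineMap.lineMap B C v := by
    rw [hfx, ← hb1, Matrix.toLin_self]
    simp only [Matrix.of_apply, Matrix.cons_val', Matrix.cons_val_one, Matrix.cons_val_fin_one,
      Matrix.cons_val_zero, Fin.sum_univ_two, hb0, hb1, AffineMap.lineMap_apply_module]
    module
  have hdet : LinearMap.det f.linear = v := by
    simp [f, L, LinearMap.det_toLin, Matrix.det_fin_two_of]
  simpa [hfA, hfB, hfC, hdet, abs_of_nonneg hv] using triangleArea_map f A B C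

theorem triangleArea_pos {A B C : EuclideanSpace ℝ (Fin 2)}
    (hind : AffineIndependent ℝ ![A, B, C]) : 0 < triangleArea A B C := by
  have hspan : affineSpan ℝ ({A, B, C} : Set (EuclideanSpace ℝ (Fin 2))) = ⊤ := by
    have hrange : Set.range ![A, B, C] = {A, B, C} := by
      rw [Matrix.range_cons, Matrix.range_cons_cons_empty]
      rfl
    rw [← hrange, hind.affineSpan_eq_top_iff_card_eq_finrank_add_one]
    simp
  have hfin : ({A, B, C} : Set (EuclideanSpace ℝ (Fin 2))).Finite := by simp
  exact ENNReal.toReal_pos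
    (Measure.measure_pos_of_nonempty_interior _
      (interior_convexHull_nonempty_iff_affineSpan_eq_top.2 hspan)).ne'
    (hfin.isCompact_convexHull (𝕜 := ℝ)).measure_lt_top.ne

section

variable {A B C : EuclideanSpace ℝ (Fin 2)} {v : ℝ}

theorem dist_pos_of_affineIndependent (hind : AffineIndependent ℝ ![A, B, C]) :
    0 < dist A B :=
  dist_pos.2 (by simpa using hind.injective.ne (show (0 : Fin 3) ≠ 1 by decide))

theorem triangleCircumradius_lineMap_le (hind : AffineIndependent ℝ ![A, B, C])
    (hv : v ∈ Set.Icc 0 1) (hAB : dist A B = v * dist B C) (hAC : dist A B ≤ dist A C) :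
    triangleCircumradius A B (AffineMap.lineMap B C v) ≤ triangleCircumradius A B C := by
  set D := AffineMap.lineMap B C v
  have hS := triangleArea_pos hind
  have hc := dist_pos_of_affineIndependent hind
  have hv0 : 0 < v := pos_of_mul_pos_left (hAB ▸ hc) dist_nonneg
  have hAD : dist A D ≤ dist A C := Metric.mem_closedBall'.1 <|
    (convex_closedBall A (dist A C)).segment_subset (Metric.mem_closedBall'.2 hAC)
      (Metric.mem_closedBall'.2 le_rfl) (lineMap_mem_segment ℝ B C hv)
  calc triangleCircumradius A B D = dist A B * dist B C * dist A D / (4 * triangleArea A B C) := by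
        rw [triangleCircumradius, triangleArea_lineMap hind hv.1, dist_left_lineMap,
          Real.norm_of_nonneg hv.1, dist_comm D A, hAB]
        field_simp
    _ ≤ dist A B * dist B C * dist A C / (4 * triangleArea A B C) := by gcongr
    _ = triangleCircumradius A B C := by rw [triangleCircumradius, dist_comm C A]

theorem triangleInradius_lineMap_le (hind : AffineIndependent ℝ ![A, B, C])
    (hv : v ∈ Set.Icc 0 1) (hAB : dist A B = v * dist B C) :
    triangleInradius A B (AffineMap.lineMap B C v) ≤ triangleInradius A B C := by
  set D := AffineMap.lineMap B C v
  have hS := triangleArea_pos hind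
  have hc := dist_pos_of_affineIndependent hind
  have hv0 : 0 < v := pos_of_mul_pos_left (hAB ▸ hc) dist_nonneg
  have hAD : dist A C ≤ dist A D + (1 - v) * dist B C := by
    have := dist_lineMap_right B C v
    rw [Real.norm_of_nonneg (sub_nonneg.2 hv.2)] at this
    exact this ▸ dist_triangle A D C
  have hBC : dist B C ≤ dist A B + dist A C := dist_comm A B ▸ dist_triangle B A C
  have hperim : v * (dist A B + dist B C + dist A C) ≤ 2 * dist A B + dist A D := by
    nlinarith [mul_le_mul_of_nonneg_right hv.2 (sub_nonneg.2 hBC)]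
  calc triangleInradius A B D = v * triangleArea A B C / ((2 * dist A B + dist A D) / 2) := by
        rw [triangleInradius, triangleArea_lineMap hind hv.1, dist_left_lineMap,
          Real.norm_of_nonneg hv.1, ← hAB, dist_comm D A, two_mul]
    _ ≤ v * triangleArea A B C / (v * (dist A B + dist B C + dist A C) / 2) := by
        gcongr
    _ = triangleInradius A B C := by
        rw [triangleInradius, dist_comm C A]
        field_simp

end

theorem circumradius_inradius_isosceles_le_general (A B C D : EuclideanSpace ℝ (Fin 2))
    (hind : AffineIndependent ℝ ![A, B, C])
    (h2 : dist B C ≤ dist A C)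
    (hD : D ∈ segment ℝ B C) (hBD : dist B D = dist A B) :
    triangleCircumradius A B D ≤ triangleCircumradius A B C ∧
      triangleInradius A B D ≤ triangleInradius A B C := by
  rw [segment_eq_image_lineMap] at hD
  obtain ⟨v, hv, rfl⟩ := hD
  have hAB : dist A B = v * dist B C := by
    rw [← hBD, dist_left_lineMap, Real.norm_of_nonneg hv.1]
  have hAC : dist A B ≤ dist A C :=
    hAB ▸ (mul_le_of_le_one_left dist_nonneg hv.2).trans h2
  exact ⟨triangleCircumradius_lineMap_le hind hv hAB hAC, triangleInradius_lineMap_le hind hv hAB⟩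

/-- For a nondegenerate triangle `A B C` with `dist A B ≤ dist B C ≤ dist A C`, and a point
`D` on the segment `[B, C]` with `dist B D = dist A B`, both the circumradius and the
inradius of the triangle `A B D` are at most those of `A B C`. -/
theorem circumradius_inradius_isosceles_le (A B C D : EuclideanSpace ℝ (Fin 2))
    (hind : AffineIndependent ℝ ![A, B, C])
    (h1 : dist A B ≤ dist B C) (h2 : dist B C ≤ dist A C)
    (hD : D ∈ segment ℝ B C) (hBD : dist B D = dist A B) :
    triangleCircumradius A B D ≤ triangleCircumradius A B C ∧
      triangleInradius A B D ≤ triangleInradius A B C :=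
  circumradius_inradius_isosceles_le_general A B C D hind h2 hD hBD
end

section
/- Let a, b, c be real numbers with a ≥ 1, b ≥ 1, c ≥ 1 satisfying the strict triangle inequalities a < b + c, b < a + c, c < a + b. Put s = (a + b + c)/2 and K = √(s·(s−a)·(s−b)·(s−c)) (Heron's area). Then the sum of the circumradius and the inradius satisfies (a·b·c)/(4·K) + K/s ≥ √3/2, with equality if and only if a = b = c = 1. -/
/-!
With `x = s - a`, `y = s - b`, `z = s - c` one has `r (4R + r) = xy + yz + zx`, so
`(R + r)² = (xy + yz + zx) + R (R - 2r)`. The second summand is nonnegative by Euler's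
inequality `R ≥ 2r`, and `2 (xy + yz + zx) = a x + b y + c z ≥ x + y + z = s ≥ 3/2` when all
sides are at least `1`. Equality forces `s = 3/2`, i.e. `a = b = c = 1`.
-/

section Triangle

variable {a b c s K : ℝ}

theorem inradius_mul_four_mul_circumradius_add_inradius (hs : s = (a + b + c) / 2)
    (hK : K ^ 2 = s * (s - a) * (s - b) * (s - c)) (hs0 : s ≠ 0) (hK0 : K ≠ 0) :
    K / s * (4 * (a * b * c / (4 * K)) + K / s) =
      (s - a) * (s - b) + (s - b) * (s - c) + (s - c) * (s - a) := by
  field_simp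
  rw [hK]
  subst hs
  ring

theorem circumradius_sub_two_mul_inradius (hK : K ^ 2 = s * (s - a) * (s - b) * (s - c))
    (hs0 : s ≠ 0) (hK0 : K ≠ 0) :
    a * b * c / (4 * K) - 2 * (K / s) =
      (a * b * c - 8 * ((s - a) * (s - b) * (s - c))) / (4 * K) := by
  field_simp
  rw [hK]
  ring

theorem eight_mul_prod_sub_le_mul_mul (hs : s = (a + b + c) / 2)
    (hx : 0 ≤ s - a) (hy : 0 ≤ s - b) (hz : 0 ≤ s - c) :
    8 * ((s - a) * (s - b) * (s - c)) ≤ a * b * c := by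
  have hsos : a * b * c - 8 * ((s - a) * (s - b) * (s - c)) =
      (s - a) * (b - c) ^ 2 + (s - b) * (c - a) ^ 2 + (s - c) * (a - b) ^ 2 := by
    subst hs
    ring
  rw [← sub_nonneg, hsos]
  positivity

theorem semiperimeter_le_two_mul_sum_sub_mul_sub (hs : s = (a + b + c) / 2)
    (ha : 1 ≤ a) (hb : 1 ≤ b) (hc : 1 ≤ c)
    (hx : 0 ≤ s - a) (hy : 0 ≤ s - b) (hz : 0 ≤ s - c) :
    s ≤ 2 * ((s - a) * (s - b) + (s - b) * (s - c) + (s - c) * (s - a)) := by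
  have hsum : 2 * ((s - a) * (s - b) + (s - b) * (s - c) + (s - c) * (s - a)) =
      a * (s - a) + b * (s - b) + c * (s - c) := by
    subst hs
    ring
  rw [hsum]
  linarith [mul_le_mul_of_nonneg_right ha hx, mul_le_mul_of_nonneg_right hb hy,
    mul_le_mul_of_nonneg_right hc hz]

end Triangle

/-- For a triangle with side lengths `a, b, c ≥ 1`, with semiperimeter `s` and Heron area `K`,
the sum of the circumradius `a·b·c/(4·K)` and the inradius `K/s` is at least `√3/2`, with
equality if and only if `a = b = c = 1`. -/
theorem circumradius_add_inradius_ge (a b c s K : ℝ)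
    (ha : 1 ≤ a) (hb : 1 ≤ b) (hc : 1 ≤ c)
    (h1 : a < b + c) (h2 : b < a + c) (h3 : c < a + b)
    (hs : s = (a + b + c) / 2)
    (hK : K = Real.sqrt (s * (s - a) * (s - b) * (s - c))) :
    Real.sqrt 3 / 2 ≤ a * b * c / (4 * K) + K / s ∧
      (a * b * c / (4 * K) + K / s = Real.sqrt 3 / 2 ↔ a = 1 ∧ b = 1 ∧ c = 1) := by
  have hx : 0 < s - a := by rw [hs]; linarith
  have hy : 0 < s - b := by rw [hs]; linarith
  have hz : 0 < s - c := by rw [hs]; linarith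
  have hs0 : 0 < s := by linarith
  have hK2 : K ^ 2 = s * (s - a) * (s - b) * (s - c) := by rw [hK, Real.sq_sqrt (by positivity)]
  have hK0 : 0 < K := by rw [hK]; positivity
  set R := a * b * c / (4 * K)
  set r := K / s
  set q := (s - a) * (s - b) + (s - b) * (s - c) + (s - c) * (s - a)
  have hsq : (2 * (R + r)) ^ 2 = 4 * q + 4 * R * (R - 2 * r) := by
    linear_combination 4 * inradius_mul_four_mul_circumradius_add_inradius hs hK2 hs0.ne' hK0.ne'
  have hR : 0 < R := by positivity
  have heuler : 0 ≤ R - 2 * r := by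
    rw [circumradius_sub_two_mul_inradius hK2 hs0.ne' hK0.ne']
    have hnum := eight_mul_prod_sub_le_mul_mul hs hx.le hy.le hz.le
    exact div_nonneg (sub_nonneg.2 hnum) (by positivity)
  have hq := semiperimeter_le_two_mul_sum_sub_mul_sub hs ha hb hc hx.le hy.le hz.le
  have hRR := mul_nonneg hR.le heuler
  have hlow : 3 ≤ (2 * (R + r)) ^ 2 := by linarith
  refine ⟨?_, ?_⟩
  · rw [div_le_iff₀ two_pos, mul_comm]
    exact Real.sqrt_le_iff.2 ⟨by positivity, hlow⟩
  · rw [eq_div_iff two_ne_zero, mul_comm, eq_comm,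
      Real.sqrt_eq_iff_eq_sq (by norm_num) (by positivity), eq_comm]
    constructor
    · intro h
      have hs' : s ≤ 3 / 2 := by linarith
      refine ⟨?_, ?_, ?_⟩ <;> linarith
    · rintro ⟨rfl, rfl, rfl⟩
      have hs' : s = 3 / 2 := by rw [hs]; norm_num
      rw [hsq, circumradius_sub_two_mul_inradius hK2 hs0.ne' hK0.ne']
      subst hs'
      norm_num [q]
end

section
/- The real function g(x) = (2 + 2x − x²)/(2·√(4 − x²)) is strictly monotonically increasing on the interval [1, 2). In particular g(1) = √3/2, and for every x ∈ [1, 2) one has g(x) ≥ √3/2 with equality if and only if x = 1. -/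
open Real Set

/-- The sum of the circumradius and the inradius of the isosceles triangle with sides `1, 1, x`. -/
noncomputable def circumAddInradius (x : ℝ) : ℝ :=
  (2 + 2 * x - x ^ 2) / (2 * √(4 - x ^ 2))

lemma circumAddInradius_one : circumAddInradius 1 = √3 / 2 := by
  have h3 : √3 * √3 = 3 := mul_self_sqrt (by norm_num)
  rw [circumAddInradius, div_eq_div_iff (by positivity) (by norm_num)]
  norm_num
  linear_combination -2 * h3

-- For `x ≥ 0` write it as `x (1 - x)² + 2 (2 - x)² + x`; for `x < 0` as `(x + 2) ((x - 1)² + 3) - 6x`.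
lemma cubic_pos_of_neg_two_lt {x : ℝ} (hx : -2 < x) : 0 < 8 - 6 * x + x ^ 3 := by
  rcases le_or_gt 0 x with hx0 | hx0
  · nlinarith [mul_nonneg hx0 (sq_nonneg (1 - x)), sq_nonneg (2 - x)]
  · nlinarith [mul_pos (by linarith : 0 < x + 2) (by positivity : 0 < (x - 1) ^ 2 + 3)]

lemma hasDerivAt_circumAddInradius {x : ℝ} (hx : x ^ 2 < 4) :
    HasDerivAt circumAddInradius
      ((8 - 6 * x + x ^ 3) / (2 * (4 - x ^ 2) * √(4 - x ^ 2))) x := by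
  have hu : 0 < 4 - x ^ 2 := by linarith
  have hsq : √(4 - x ^ 2) ^ 2 = 4 - x ^ 2 := sq_sqrt hu.le
  have hnum : HasDerivAt (fun x : ℝ => 2 + 2 * x - x ^ 2) (2 - 2 * x) x := by
    simpa [Pi.sub_def] using ((hasDerivAt_id x).const_mul 2).const_add 2 |>.sub (hasDerivAt_pow 2 x)
  have hrad : HasDerivAt (fun x : ℝ => 4 - x ^ 2) (-(2 * x)) x := by
    simpa using (hasDerivAt_pow 2 x).const_sub 4
  have hroot : HasDerivAt (fun x : ℝ => √(4 - x ^ 2)) (1 / (2 * √(4 - x ^ 2)) * -(2 * x)) x := by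
    simpa only [Function.comp_def] using (hasDerivAt_sqrt hu.ne').comp x hrad
  have hden := hroot.const_mul 2
  refine (hnum.div hden (by positivity)).congr_deriv ?_
  field_simp
  linear_combination (2 * (4 - x ^ 2) * (1 - x) - (8 - 6 * x + x ^ 3)) * hsq

lemma strictMonoOn_circumAddInradius : StrictMonoOn circumAddInradius (Ioo (-2) 2) := by
  have hsq {x : ℝ} (hx : x ∈ Ioo (-2 : ℝ) 2) : x ^ 2 < 4 := by nlinarith [hx.1, hx.2]
  refine strictMonoOn_of_deriv_pos (convex_Ioo _ _)
    (fun x hx => (hasDerivAt_circumAddInradius (hsq hx)).continuousAt.continuousWithinAt)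
    fun x hx => ?_
  rw [interior_Ioo] at hx
  have hu : 0 < 4 - x ^ 2 := by linarith [hsq hx]
  rw [(hasDerivAt_circumAddInradius (hsq hx)).deriv]
  have := cubic_pos_of_neg_two_lt hx.1
  positivity

/-- The function `g(x) = (2 + 2x - x²)/(2·√(4 - x²))` is strictly increasing on `[1, 2)`,
`g(1) = √3/2`, and for every `x ∈ [1, 2)` one has `g(x) ≥ √3/2` with equality iff `x = 1`. -/
theorem strictMonoOn_circum_add_inradius :
    StrictMonoOn (fun x : ℝ => (2 + 2 * x - x ^ 2) / (2 * Real.sqrt (4 - x ^ 2)))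
      (Set.Ico (1 : ℝ) 2) ∧
    (2 + 2 * (1 : ℝ) - (1 : ℝ) ^ 2) / (2 * Real.sqrt (4 - (1 : ℝ) ^ 2)) = Real.sqrt 3 / 2 ∧
    ∀ x ∈ Set.Ico (1 : ℝ) 2,
      Real.sqrt 3 / 2 ≤ (2 + 2 * x - x ^ 2) / (2 * Real.sqrt (4 - x ^ 2)) ∧
      ((2 + 2 * x - x ^ 2) / (2 * Real.sqrt (4 - x ^ 2)) = Real.sqrt 3 / 2 ↔ x = 1) := by
  have hmono : StrictMonoOn circumAddInradius (Ico 1 2) :=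
    strictMonoOn_circumAddInradius.mono fun x hx => ⟨by linarith [hx.1], hx.2⟩
  have hone : (1 : ℝ) ∈ Ico 1 2 := by norm_num
  refine ⟨hmono, circumAddInradius_one, fun x hx => ⟨?_, ?_⟩⟩
  · rw [← circumAddInradius_one]
    exact (hmono.le_iff_le hone hx).mpr hx.1
  · rw [← circumAddInradius_one]
    exact hmono.injOn.eq_iff hx hone
end

section
/- There exist constants c > 0 and ε₀ > 0 such that for every ε with 0 < ε < ε₀ and all points A, B, C of the Euclidean plane satisfying dist A B = 1 + ε, 1 ≤ dist A C ≤ 1 + ε and 1 ≤ dist B C ≤ 1 + ε, the area of the triangle A B C is strictly greater than √3/4 + c·ε. -/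
/-!
Translate `A` to the origin and put `u = B - A`, `v = C - A`. The parallelogram spanned by `u`
and `v` is covered by the triangle `0 u v` and its point reflection through `(u + v) / 2`, so
the area of the triangle is at least `|det (u, v)| / 2`. By Lagrange's identity and the law of
cosines, `16 · (det (u, v) / 2)²` is Heron's product of the side lengths, which under the
constraints is at least `(3 - 2ε - ε²)(1 + 2ε) = 3 + 4ε + O(ε²)`, whereas `√3 / 2 + ε / 4`
squared is only `3 + √3 ε + O(ε²)`; hence `c = 1/8` works for `ε < 1/4`.
-/

open MeasureTheory Pointwise

local notation "E2" => EuclideanSpace ℝ (Fin 2)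

section ConvexHull

variable {E : Type*} [AddCommGroup E] [Module ℝ E]

theorem smul_add_smul_mem_convexHull_zero {u v : E} {a b : ℝ} (ha : 0 ≤ a) (hb : 0 ≤ b)
    (hab : a + b ≤ 1) : a • u + b • v ∈ convexHull ℝ ({0, u, v} : Set E) := by
  have h := (convex_convexHull ℝ ({0, u, v} : Set E)).sum_mem
    (t := Finset.univ) (w := ![1 - a - b, a, b]) (z := ![0, u, v])
    (by intro i _; fin_cases i <;> simp <;> linarith)
    (by simp [Fin.sum_univ_three]; ring)
    (by intro i _; apply subset_convexHull; fin_cases i <;> simp)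
  simpa [Fin.sum_univ_three] using h

theorem measure_convexHull_triangle_eq_sub [MeasurableSpace E] (μ : Measure E)
    [μ.IsAddLeftInvariant] (A B C : E) :
    μ (convexHull ℝ {A, B, C}) = μ (convexHull ℝ ({0, B - A, C - A} : Set E)) := by
  have h : ({A, B, C} : Set E) = A +ᵥ ({0, B - A, C - A} : Set E) := by
    simp [Set.vadd_set_insert]
  rw [h, convexHull_vadd, measure_vadd]

theorem parallelepiped_subset_convexHull_union (u v : E) :
    parallelepiped ![u, v] ⊆
      convexHull ℝ {0, u, v} ∪ ((u + v) +ᵥ -convexHull ℝ ({0, u, v} : Set E)) := by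
  rintro _ ⟨t, ⟨ht_nonneg, ht_le_one⟩, rfl⟩
  simp only [Fin.sum_univ_two, Matrix.cons_val_zero, Matrix.cons_val_one]
  by_cases hc : t 0 + t 1 ≤ 1
  · exact Or.inl (smul_add_smul_mem_convexHull_zero (ht_nonneg 0) (ht_nonneg 1) hc)
  · have ht0 : t 0 ≤ 1 := ht_le_one 0
    have ht1 : t 1 ≤ 1 := ht_le_one 1
    refine Or.inr ⟨-((1 - t 0) • u + (1 - t 1) • v), ?_, by simp only [vadd_eq_add]; module⟩
    rw [Set.mem_neg, neg_neg]
    exact smul_add_smul_mem_convexHull_zero (by linarith) (by linarith) (by linarith)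

end ConvexHull

section Area

variable {E : Type*} [NormedAddCommGroup E] [NormedSpace ℝ E] [MeasurableSpace E]
  [BorelSpace E] [FiniteDimensional ℝ E] (μ : Measure E) [μ.IsAddHaarMeasure]

theorem measure_parallelepiped_le_two_mul_measure_convexHull (u v : E) :
    μ (parallelepiped ![u, v]) ≤ 2 * μ (convexHull ℝ {0, u, v}) :=
  calc μ (parallelepiped ![u, v])
      ≤ μ (convexHull ℝ {0, u, v}) + μ ((u + v) +ᵥ -convexHull ℝ ({0, u, v} : Set E)) :=
        (measure_mono (parallelepiped_subset_convexHull_union u v)).trans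
          (measure_union_le _ _)
    _ = 2 * μ (convexHull ℝ {0, u, v}) := by
        rw [measure_vadd, Measure.measure_neg, two_mul]

end Area

theorem volume_parallelepiped_fin_two (u v : E2) :
    volume (parallelepiped ![u, v]) = ENNReal.ofReal |u 0 * v 1 - u 1 * v 0| := by
  rw [← (EuclideanSpace.basisFun (Fin 2) ℝ).addHaar_eq_volume, Measure.addHaar_parallelepiped,
    Module.Basis.det_apply, Matrix.det_fin_two]
  simp [Module.Basis.toMatrix_apply, mul_comm]

theorem abs_det_le_two_mul_volume_convexHull (u v : E2) :
    |u 0 * v 1 - u 1 * v 0| ≤ 2 * (volume (convexHull ℝ {0, u, v})).toReal := by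
  have hfin : volume (convexHull ℝ ({0, u, v} : Set E2)) ≠ ⊤ :=
    (Set.toFinite ({0, u, v} : Set E2)).isCompact_convexHull ℝ |>.measure_lt_top.ne
  have h := measure_parallelepiped_le_two_mul_measure_convexHull volume u v
  rw [volume_parallelepiped_fin_two] at h
  simpa using (ENNReal.toReal_le_toReal ENNReal.ofReal_ne_top
    (ENNReal.mul_ne_top ENNReal.ofNat_ne_top hfin)).mpr h

theorem sq_det_eq_sq_norm_mul_sq_norm_sub_sq_inner (u v : E2) :
    (u 0 * v 1 - u 1 * v 0) ^ 2 = ‖u‖ ^ 2 * ‖v‖ ^ 2 - inner ℝ u v ^ 2 := by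
  simp only [EuclideanSpace.norm_sq_eq, PiLp.inner_apply, Fin.sum_univ_two, Real.norm_eq_abs,
    sq_abs, RCLike.inner_apply, conj_trivial]
  ring

theorem four_mul_sq_det_eq_heron (u v : E2) :
    4 * (u 0 * v 1 - u 1 * v 0) ^ 2 =
      ((‖v‖ + ‖u - v‖) ^ 2 - ‖u‖ ^ 2) * (‖u‖ ^ 2 - (‖v‖ - ‖u - v‖) ^ 2) := by
  rw [sq_det_eq_sq_norm_mul_sq_norm_sub_sq_inner,
    real_inner_eq_norm_mul_self_add_norm_mul_self_sub_norm_sub_mul_self_div_two]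
  ring

theorem heron_product_gt_of_near_equilateral {ε b c : ℝ} (hε : 0 < ε) (hε' : ε < 1 / 4)
    (hb : 1 ≤ b) (hb' : b ≤ 1 + ε) (hc : 1 ≤ c) (hc' : c ≤ 1 + ε) :
    4 * (Real.sqrt 3 / 2 + ε / 4) ^ 2 <
      ((b + c) ^ 2 - (1 + ε) ^ 2) * ((1 + ε) ^ 2 - (b - c) ^ 2) := by
  have hsum : 3 - 2 * ε - ε ^ 2 ≤ (b + c) ^ 2 - (1 + ε) ^ 2 := by
    nlinarith [sq_nonneg (b + c - 2)]
  have hdiff : 1 + 2 * ε ≤ (1 + ε) ^ 2 - (b - c) ^ 2 := by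
    nlinarith [mul_nonneg (by linarith : (0 : ℝ) ≤ ε - (b - c)) (by linarith : 0 ≤ ε + (b - c))]
  have hprod : (3 - 2 * ε - ε ^ 2) * (1 + 2 * ε) ≤
      ((b + c) ^ 2 - (1 + ε) ^ 2) * ((1 + ε) ^ 2 - (b - c) ^ 2) :=
    mul_le_mul hsum hdiff (by linarith) (by nlinarith)
  have hsqrt3 : Real.sqrt 3 < 7 / 4 := by
    rw [Real.sqrt_lt' (by norm_num)]; norm_num
  have hsq3 : Real.sqrt 3 ^ 2 = 3 := Real.sq_sqrt (by norm_num)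
  nlinarith [mul_lt_mul_of_pos_right hsqrt3 hε, mul_lt_mul_of_pos_left hε' (mul_pos hε hε)]

/-- There are constants `c > 0` and `ε₀ > 0` such that for all `0 < ε < ε₀`, every triangle
`A B C` with `dist A B = 1 + ε` and the other two sides of lengths in `[1, 1 + ε]` has area
strictly greater than `√3/4 + c·ε`. -/
theorem area_triangle_gt_of_perturbation :
    ∃ c > (0 : ℝ), ∃ ε₀ > (0 : ℝ), ∀ ε : ℝ, 0 < ε → ε < ε₀ →
      ∀ A B C : EuclideanSpace ℝ (Fin 2),
        dist A B = 1 + ε →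
        1 ≤ dist A C → dist A C ≤ 1 + ε →
        1 ≤ dist B C → dist B C ≤ 1 + ε →
        (volume (convexHull ℝ ({A, B, C} : Set (EuclideanSpace ℝ (Fin 2))))).toReal >
          Real.sqrt 3 / 4 + c * ε := by
  refine ⟨1 / 8, by norm_num, 1 / 4, by norm_num, ?_⟩
  intro ε hε hε' A B C hAB hAC hAC' hBC hBC'
  set u := B - A
  set v := C - A
  have harea := abs_det_le_two_mul_volume_convexHull u v
  have hheron := four_mul_sq_det_eq_heron u v
  rw [show u - v = B - C by simp [u, v], ← dist_eq_norm, ← dist_eq_norm, ← dist_eq_norm,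
    dist_comm B A, dist_comm C A, hAB] at hheron
  have hdet : Real.sqrt 3 / 2 + ε / 4 < |u 0 * v 1 - u 1 * v 0| := by
    have h := heron_product_gt_of_near_equilateral hε hε' hAC hAC' hBC hBC'
    rw [← hheron] at h
    exact lt_of_pow_lt_pow_left₀ 2 (abs_nonneg _) (by rw [sq_abs]; linarith)
  rw [gt_iff_lt, measure_convexHull_triangle_eq_sub]
  linarith
end

section
/- There exists ε₀ > 0 such that for every ε with 0 < ε < ε₀ the following holds. Let A, B, C be the vertices of an equilateral triangle of side 1 in the Euclidean plane, and let A', B', C' be points such that all three mutual distances dist A' B', dist B' C', dist A' C' lie in the interval [1, 1 + ε], dist A A' ≤ ε, dist B B' ≤ ε, and C and C' lie in the same open half-plane determined by the line through A and B. Then dist C C' ≤ 10·ε. -/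
/-- The 2×2 determinant of two vectors of the Euclidean plane. -/
noncomputable def det2 (u v : EuclideanSpace ℝ (Fin 2)) : ℝ :=
  u 0 * v 1 - u 1 * v 0

/-!
Take coordinates `x = ⟪B - A, X - A⟫`, `y = det2 (B - A) (X - A)` of a point `X`: since `‖B - A‖ = 1`
this is an isometric frame in which `A = (0, 0)`, `B = (1, 0)`, `C = (1/2, s)` with `s² = 3/4`.
The point `C' = (x, y)` has distances to `A` and `B` within `O(ε)` of `1`. Their squares differ by
`2x - 1`, which pins `x` to `1/2` up to `3.1 ε`, and then `y²` is within `7.5 ε` of `3/4`.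
Because `y` and `s` have the same sign, `|y - s| = |y² - s²| / |y + s| ≤ |y² - s²| / |s|`.
-/

open Set RealInnerProductSpace

lemma sq_sub_mul_sq_le_sq_sub_sq_sq {a b : ℝ} (hab : 0 ≤ a * b) :
    (a - b) ^ 2 * a ^ 2 ≤ (a ^ 2 - b ^ 2) ^ 2 :=
  calc (a - b) ^ 2 * a ^ 2 ≤ (a - b) ^ 2 * (a + b) ^ 2 := by
        apply mul_le_mul_of_nonneg_left _ (sq_nonneg _); nlinarith [sq_nonneg b]
    _ = (a ^ 2 - b ^ 2) ^ 2 := by ring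

lemma apex_coords_sq_dist_le {ε x y s : ℝ} (hε : 0 ≤ ε) (hε₁ : ε < 1 / 100)
    (hs : s ^ 2 = 3 / 4) (hsy : 0 < s * y)
    (hA : x ^ 2 + y ^ 2 ∈ Icc ((1 - ε) ^ 2) ((1 + 2 * ε) ^ 2))
    (hB : (x - 1) ^ 2 + y ^ 2 ∈ Icc ((1 - ε) ^ 2) ((1 + 2 * ε) ^ 2)) :
    (x - 1 / 2) ^ 2 + (y - s) ^ 2 ≤ (10 * ε) ^ 2 := by
  obtain ⟨hA₁, hA₂⟩ := hA
  obtain ⟨hB₁, hB₂⟩ := hB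
  have hx : |x - 1 / 2| ≤ 31 / 10 * ε := by
    rw [abs_le]; constructor <;> nlinarith
  have hx_sq : |x ^ 2 - 1 / 4| ≤ 33 / 10 * ε := by
    have hx_add : |x + 1 / 2| ≤ 1 + 31 / 10 * ε := by
      rw [abs_le] at hx ⊢; constructor <;> linarith
    calc |x ^ 2 - 1 / 4| = |x - 1 / 2| * |x + 1 / 2| := by rw [← abs_mul]; ring_nf
      _ ≤ 31 / 10 * ε * (1 + 31 / 10 * ε) := by gcongr
      _ ≤ 33 / 10 * ε := by nlinarith
  have hy_sq : |s ^ 2 - y ^ 2| ≤ 15 / 2 * ε := by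
    rw [abs_le] at hx_sq ⊢; constructor <;> nlinarith
  have hy : (s - y) ^ 2 * (3 / 4) ≤ (15 / 2 * ε) ^ 2 := by
    rw [← hs]
    calc (s - y) ^ 2 * s ^ 2 ≤ (s ^ 2 - y ^ 2) ^ 2 := sq_sub_mul_sq_le_sq_sub_sq_sq hsy.le
      _ = |s ^ 2 - y ^ 2| ^ 2 := (sq_abs _).symm
      _ ≤ (15 / 2 * ε) ^ 2 := by gcongr
  have hx' : (x - 1 / 2) ^ 2 ≤ (31 / 10 * ε) ^ 2 := by
    rw [← sq_abs]; gcongr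
  nlinarith

lemma det2_sub_right (u v w : EuclideanSpace ℝ (Fin 2)) :
    det2 u (v - w) = det2 u v - det2 u w := by
  simp only [det2, PiLp.sub_apply]; ring

lemma det2_self (u : EuclideanSpace ℝ (Fin 2)) : det2 u u = 0 := by
  simp only [det2]; ring

lemma inner_sq_add_det2_sq (u v : EuclideanSpace ℝ (Fin 2)) :
    ⟪u, v⟫ ^ 2 + det2 u v ^ 2 = ‖u‖ ^ 2 * ‖v‖ ^ 2 := by
  simp only [EuclideanSpace.norm_sq_eq, PiLp.inner_apply, Fin.sum_univ_two, det2,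
    Real.norm_eq_abs, sq_abs, RCLike.inner_apply, conj_trivial]
  ring

lemma dist_sq_eq_inner_sub_sq_add_det2_sub_sq {A B : EuclideanSpace ℝ (Fin 2)}
    (hAB : dist A B = 1) (X Y : EuclideanSpace ℝ (Fin 2)) :
    dist X Y ^ 2 = (⟪B - A, X - A⟫ - ⟪B - A, Y - A⟫) ^ 2
      + (det2 (B - A) (X - A) - det2 (B - A) (Y - A)) ^ 2 := by
  have hu : ‖B - A‖ = 1 := by rw [← dist_eq_norm, dist_comm, hAB]
  rw [← inner_sub_right, ← det2_sub_right, inner_sq_add_det2_sq, hu, dist_eq_norm]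
  simp

lemma dist_mem_Icc_of_dist_le {α : Type*} [PseudoMetricSpace α] {a b ε : ℝ} {X X' Y : α}
    (h : dist X' Y ∈ Icc a b) (hX : dist X X' ≤ ε) : dist X Y ∈ Icc (a - ε) (b + ε) :=
  ⟨by linarith [h.1, dist_triangle X' X Y, dist_comm X X'],
    by linarith [h.2, dist_triangle X X' Y]⟩

lemma dist_apex_le {ε : ℝ} (hε : 0 ≤ ε) (hε₁ : ε < 1 / 100)
    {A B C C' : EuclideanSpace ℝ (Fin 2)}
    (hAB : dist A B = 1) (hBC : dist B C = 1) (hAC : dist A C = 1)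
    (hAC' : dist A C' ∈ Icc (1 - ε) (1 + 2 * ε)) (hBC' : dist B C' ∈ Icc (1 - ε) (1 + 2 * ε))
    (hside : 0 < det2 (B - A) (C - A) * det2 (B - A) (C' - A)) :
    dist C C' ≤ 10 * ε := by
  have hdist := dist_sq_eq_inner_sub_sq_add_det2_sub_sq hAB
  have hdist_A (X) : dist A X ^ 2 = ⟪B - A, X - A⟫ ^ 2 + det2 (B - A) (X - A) ^ 2 := by
    simp [dist_comm A, hdist, det2]
  have hdist_B (X) : dist B X ^ 2 = (⟪B - A, X - A⟫ - 1) ^ 2 + det2 (B - A) (X - A) ^ 2 := by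
    rw [dist_comm, hdist, det2_self, real_inner_self_eq_norm_sq, ← dist_eq_norm, dist_comm, hAB]
    ring
  have sq_mem {d : ℝ} (hd : d ∈ Icc (1 - ε) (1 + 2 * ε)) :
      d ^ 2 ∈ Icc ((1 - ε) ^ 2) ((1 + 2 * ε) ^ 2) :=
    ⟨pow_le_pow_left₀ (by linarith) hd.1 2, pow_le_pow_left₀ (by linarith [hd.1]) hd.2 2⟩
  have hCA := hdist_A C
  have hCB := hdist_B C
  rw [hAC] at hCA
  rw [hBC] at hCB
  have hCx : ⟪B - A, C - A⟫ = 1 / 2 := by linear_combination (hCB - hCA) / 2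
  have hCy : det2 (B - A) (C - A) ^ 2 = 3 / 4 := by
    rw [hCx] at hCA; linear_combination -hCA
  have key := apex_coords_sq_dist_le hε hε₁ hCy hside
    (hdist_A C' ▸ sq_mem hAC') (hdist_B C' ▸ sq_mem hBC')
  refine (pow_le_pow_iff_left₀ dist_nonneg (by positivity) two_ne_zero).mp ?_
  rw [hdist, hCx]
  linarith

/-- There is `ε₀ > 0` such that for every `0 < ε < ε₀`: if `A B C` is an equilateral triangle
of side `1`, and `A' B' C'` has all mutual distances in `[1, 1 + ε]`, with `dist A A' ≤ ε`,
`dist B B' ≤ ε`, and `C`, `C'` on the same open side of the line through `A` and `B`, then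
`dist C C' ≤ 10·ε`. -/
theorem dist_perturbed_apex_le :
    ∃ ε₀ > (0 : ℝ), ∀ ε : ℝ, 0 < ε → ε < ε₀ →
      ∀ A B C A' B' C' : EuclideanSpace ℝ (Fin 2),
        dist A B = 1 → dist B C = 1 → dist A C = 1 →
        dist A' B' ∈ Set.Icc 1 (1 + ε) →
        dist B' C' ∈ Set.Icc 1 (1 + ε) →
        dist A' C' ∈ Set.Icc 1 (1 + ε) →
        dist A A' ≤ ε → dist B B' ≤ ε →
        0 < det2 (B - A) (C - A) * det2 (B - A) (C' - A) →
        dist C C' ≤ 10 * ε := by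
  refine ⟨1 / 100, by norm_num, fun ε hε hε₁ A B C A' B' C' hAB hBC hAC _ hB'C' hA'C' hAA' hBB'
    hside ↦ ?_⟩
  have hAC' := dist_mem_Icc_of_dist_le hA'C' hAA'
  have hBC' := dist_mem_Icc_of_dist_le hB'C' hBB'
  rw [add_assoc, ← two_mul] at hAC' hBC'
  exact dist_apex_le hε.le hε₁ hAB hBC hAC hAC' hBC' hside
end

section
/- Let ε be a real number with 0 < ε ≤ 1/2, and let A, C, D be points of the Euclidean plane with C ≠ A, C ≠ D, such that the angle ∠ A C D is at least 2π/3 and both dist A C and dist A D lie in the interval [1, 1 + ε]. Then dist C D < 3·ε. -/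
open EuclideanGeometry Real

theorem Real.cos_le_neg_half_of_two_pi_div_three_le {x : ℝ} (hx : 2 * π / 3 ≤ x)
    (hxπ : x ≤ π) : cos x ≤ -(1 / 2) :=
  calc cos x ≤ cos (2 * π / 3) := cos_le_cos_of_nonneg_of_le_pi (by positivity) hxπ hx
    _ = cos (π - π / 3) := by ring_nf
    _ = -(1 / 2) := by rw [cos_pi_sub, cos_pi_div_three]

theorem EuclideanGeometry.dist_sq_add_mul_add_dist_sq_le_of_two_pi_div_three_le_angle
    {V P : Type*} [NormedAddCommGroup V] [InnerProductSpace ℝ V] [MetricSpace P]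
    [NormedAddTorsor V P] {A C D : P} (h : 2 * π / 3 ≤ ∠ A C D) :
    dist A C ^ 2 + dist A C * dist C D + dist C D ^ 2 ≤ dist A D ^ 2 := by
  have hcos := cos_le_neg_half_of_two_pi_div_three_le h (angle_le_pi A C D)
  have hlaw := law_cos A C D
  rw [dist_comm D C] at hlaw
  nlinarith [mul_nonneg (dist_nonneg (x := A) (y := C)) (dist_nonneg (x := C) (y := D))]

theorem dist_lt_of_angle_ge_two_pi_div_three_general (ε : ℝ) (hε0 : 0 < ε)
    (A C D : EuclideanSpace ℝ (Fin 2))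
    (hangle : 2 * π / 3 ≤ ∠ A C D)
    (hAC : dist A C ∈ Set.Icc 1 (1 + ε)) (hAD : dist A D ∈ Set.Icc 1 (1 + ε)) :
    dist C D < 3 * ε := by
  have hlaw := dist_sq_add_mul_add_dist_sq_le_of_two_pi_div_three_le_angle hangle
  have hAD_sq : dist A D ^ 2 ≤ (1 + ε) ^ 2 := pow_le_pow_left₀ dist_nonneg hAD.2 2
  -- `dist A C ≥ 1` gives `d² + d ≤ 2ε + ε²` for `d = dist C D`, which fails at `d = 3ε`.
  nlinarith [hAC.1, dist_nonneg (x := C) (y := D)]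

/-- If `0 < ε ≤ 1/2`, the angle at `C` between `A` and `D` is at least `2π/3`, and both
`dist A C` and `dist A D` lie in `[1, 1 + ε]`, then `dist C D < 3·ε`. -/
theorem dist_lt_of_angle_ge_two_pi_div_three (ε : ℝ) (hε0 : 0 < ε) (hε : ε ≤ 1 / 2)
    (A C D : EuclideanSpace ℝ (Fin 2)) (hCA : C ≠ A) (hCD : C ≠ D)
    (hangle : 2 * π / 3 ≤ ∠ A C D)
    (hAC : dist A C ∈ Set.Icc 1 (1 + ε)) (hAD : dist A D ∈ Set.Icc 1 (1 + ε)) :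
    dist C D < 3 * ε :=
  dist_lt_of_angle_ge_two_pi_div_three_general ε hε0 A C D hangle hAC hAD
end
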